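/- arXiv:1401.8058 — 3 statements merged into one kernel-verified Lean document; each statement's English description precedes it below -/
import Mathlib

section
/- Let A, C₀ be m×m real matrices with A C₀ - C₀ A ≠ 0, and let C(x) = e^{xA} C₀ e^{-xA}. If real constants k₁, k₂, k₃ satisfy (k₁x² + 2k₂x + k₃)(A C(x) - C(x) A) + 4(k₁x + k₂) C(x) = 0 for all real x, then k₁ = k₂ = k₃ = 0. -/
open Matrix NormedSpace

/-! Conjugating by `exp (x • A)`, which commutes with `A`, turns the hypothesis into
`p x • (A C₀ - C₀ A) + 2 p' x • C₀ = 0` with `p x = k₁ x² + 2 k₂ x + k₃`, an identity between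
constant matrices. Reading off the coefficients of `x²`, `x` and `1` in turn gives
`k₁ • B = 0`, then `k₂ • B = 0`, then `k₃ • B = 0` for `B = A C₀ - C₀ A ≠ 0`. -/

theorem commutator_mul_mul_of_commute {R : Type*} [Ring R] {a u v : R}
    (hu : Commute a u) (hv : Commute a v) (m : R) :
    a * (u * m * v) - u * m * v * a = u * (a * m - m * a) * v := by
  have hleft : a * (u * m * v) = u * (a * m) * v := by
    rw [← mul_assoc, ← mul_assoc, hu.eq, mul_assoc u a m]
  have hright : u * m * v * a = u * (m * a) * v := by
    rw [mul_assoc _ v a, ← hv.eq, ← mul_assoc, mul_assoc u m a]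
  rw [hleft, hright, mul_sub, sub_mul]

theorem eq_zero_of_isUnit_mul_mul_eq_zero {M₀ : Type*} [MonoidWithZero M₀] {u v m : M₀}
    (hu : IsUnit u) (hv : IsUnit v) (h : u * m * v = 0) : m = 0 :=
  hu.mul_right_eq_zero.mp (hv.mul_left_eq_zero.mp h)

theorem quadratic_smul_eq_zero {K V : Type*} [Field K] [CharZero K] [AddCommGroup V]
    [Module K V] {P Q R : V} (h : ∀ x : K, x ^ 2 • P + x • Q + R = 0) :
    P = 0 ∧ Q = 0 ∧ R = 0 := by
  have hR : R = 0 := by simpa using h 0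
  have hplus : P + Q = 0 := by simpa [hR] using h 1
  have hminus : P - Q = 0 := by simpa [hR, sub_eq_add_neg] using h (-1)
  have hP : P = 0 := by
    have h2P : (2 : K) • P = 0 := by rw [two_smul]; simpa using congrArg₂ (· + ·) hplus hminus
    exact (smul_eq_zero.mp h2P).resolve_left two_ne_zero
  exact ⟨hP, by simpa [hP] using hplus, hR⟩

/-- If `A C₀ - C₀ A ≠ 0`, `C x = exp(xA) C₀ exp(-xA)`, and
`(k₁x² + 2k₂x + k₃)(A C - C A) + 4(k₁x + k₂) C = 0` for all `x`, then `k₁ = k₂ = k₃ = 0`. -/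
theorem stmt_2 {m : ℕ} (A C₀ : Matrix (Fin m) (Fin m) ℝ)
    (hAC : A * C₀ - C₀ * A ≠ 0)
    (C : ℝ → Matrix (Fin m) (Fin m) ℝ)
    (hC : ∀ x : ℝ, C x = exp (x • A) * C₀ * exp (-(x • A)))
    (k₁ k₂ k₃ : ℝ)
    (h : ∀ x : ℝ,
      (k₁ * x ^ 2 + 2 * k₂ * x + k₃) • (A * C x - C x * A)
        + (4 * (k₁ * x + k₂)) • C x = 0) :
    k₁ = 0 ∧ k₂ = 0 ∧ k₃ = 0 := by
  set B := A * C₀ - C₀ * A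
  have hconst : ∀ x : ℝ, (k₁ * x ^ 2 + 2 * k₂ * x + k₃) • B + (4 * (k₁ * x + k₂)) • C₀ = 0 := by
    intro x
    have hcomm : Commute A (x • A) := (Commute.refl A).smul_right x
    refine eq_zero_of_isUnit_mul_mul_eq_zero (isUnit_exp (x • A)) (isUnit_exp (-(x • A))) ?_
    rw [mul_add, add_mul, Matrix.mul_smul, Matrix.mul_smul, Matrix.smul_mul, Matrix.smul_mul,
      ← commutator_mul_mul_of_commute hcomm.exp_right hcomm.neg_right.exp_right, ← hC x]
    exact h x
  obtain ⟨h₁, h₂, h₃⟩ := quadratic_smul_eq_zero (P := k₁ • B) (Q := (2 * k₂) • B + (4 * k₁) • C₀)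
    (R := k₃ • B + (4 * k₂) • C₀) fun x => by rw [← hconst x]; module
  have hk₁ : k₁ = 0 := (smul_eq_zero.mp h₁).resolve_right hAC
  have hk₂ : k₂ = 0 := by
    simpa using (smul_eq_zero.mp (by simpa [hk₁] using h₂ : (2 * k₂) • B = 0)).resolve_right hAC
  have hk₃ : k₃ = 0 := (smul_eq_zero.mp (by simpa [hk₂] using h₃)).resolve_right hAC
  exact ⟨hk₁, hk₂, hk₃⟩
end

section
/- Let C₀, A₂, A₃ be m×m real matrices satisfying A₂ C₀ - C₀(A₂ + 4E) = 0 and A₂ A₃ - A₃(A₂ + 2E) = 0, and let C(x) = e^{xA₃} C₀ e^{-xA₃}. Then C satisfies -2x(C A₃ - A₃ C) + C A₂ - A₂ C + 4C = 0 for all real x. -/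
/-!
Conjugation by `exp (x A₃)` is an algebra automorphism `φ` of the matrix algebra.
Since `[A₂, A₃] = 2 A₃`, the function `t ↦ exp (t A₃) A₂ exp (-t A₃) + 2t A₃` has zero
derivative, so `φ A₂ = A₂ - 2x A₃`, while `φ A₃ = A₃`. Hence `φ` maps `C₀`, `A₂ + 2x A₃`, `A₃`
to `C x`, `A₂`, `A₃`, and the identity to prove is the image under `φ` of
`-2x [C₀, A₃] + [C₀, A₂ + 2x A₃] + 4 C₀ = [C₀, A₂] + 4 C₀ = 0`.
-/

namespace NormedSpace

variable {𝔸 : Type*} [NormedRing 𝔸] [NormedAlgebra ℝ 𝔸] [CompleteSpace 𝔸]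

theorem exp_mul_exp_neg (x : 𝔸) : exp x * exp (-x) = 1 := by
  let +nondep : NormedAlgebra ℚ 𝔸 := .restrictScalars ℚ ℝ 𝔸
  rw [← exp_add_of_commute (Commute.refl x).neg_right, add_neg_cancel, exp_zero]

theorem exp_neg_mul_exp (x : 𝔸) : exp (-x) * exp x = 1 := by
  let +nondep : NormedAlgebra ℚ 𝔸 := .restrictScalars ℚ ℝ 𝔸
  rw [← exp_add_of_commute (Commute.refl x).neg_left, neg_add_cancel, exp_zero]

noncomputable def expUnit (x : 𝔸) : 𝔸ˣ :=
  ⟨exp x, exp (-x), exp_mul_exp_neg x, exp_neg_mul_exp x⟩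

noncomputable def conjExp (x : 𝔸) : 𝔸 ≃ₐ[ℝ] 𝔸 :=
  MulSemiringAction.toAlgEquiv ℝ 𝔸 (ConjAct.toConjAct (expUnit x))

theorem conjExp_apply (x y : 𝔸) : conjExp x y = exp x * y * exp (-x) := rfl

theorem conjExp_smul_apply_of_mul_sub_mul_eq_smul {a b : 𝔸} {c : ℝ}
    (h : a * b - b * a = c • b) (t : ℝ) : conjExp (t • b) a = a - (c * t) • b := by
  set g : ℝ → 𝔸 := fun s => exp (s • b) * a * exp (s • -b) + (c * s) • b
  have hderiv : ∀ s, HasDerivAt g 0 s := by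
    intro s
    have hE := hasDerivAt_exp_smul_const' (𝕂 := ℝ) b s
    have hF := hasDerivAt_exp_smul_const (𝕂 := ℝ) (-b) s
    have hl : HasDerivAt (fun s : ℝ => (c * s) • b) (c • b) s := by
      simpa using ((hasDerivAt_id s).const_mul c).smul_const b
    refine ((hE.mul_const a).mul hF |>.add hl).congr_deriv ?_
    have hbE : Commute b (exp (s • b)) := ((Commute.refl b).smul_right s).exp_right
    have hbF : Commute b (exp (s • -b)) := ((Commute.refl b).neg_right.smul_right s).exp_right
    have hEF : exp (s • b) * exp (s • -b) = 1 := by rw [smul_neg, exp_mul_exp_neg]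
    calc b * exp (s • b) * a * exp (s • -b) + exp (s • b) * a * (exp (s • -b) * -b) + c • b
        = -(exp (s • b) * (a * b - b * a) * exp (s • -b)) + c • b := by
          rw [mul_neg, ← hbF.eq, hbE.eq]; noncomm_ring
      _ = 0 := by
          rw [h, mul_smul_comm, smul_mul_assoc, ← hbE.eq, mul_assoc, hEF, mul_one,
            neg_add_cancel]
  have hconst : g t = g 0 :=
    is_const_of_deriv_eq_zero (fun s => (hderiv s).differentiableAt)
      (fun s => (hderiv s).deriv) t 0
  simp only [g, zero_smul, exp_zero, one_mul, mul_zero, add_zero, smul_neg, neg_zero,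
    mul_one] at hconst
  exact eq_sub_of_add_eq hconst

end NormedSpace

open NormedSpace

attribute [local instance] Matrix.linftyOpNormedRing Matrix.linftyOpNormedAlgebra

/-- If `A₂C₀ - C₀(A₂+4E) = 0` and `A₂A₃ - A₃(A₂+2E) = 0` then
`C x = exp(xA₃) C₀ exp(-xA₃)` satisfies `-2x(C A₃ - A₃ C) + C A₂ - A₂ C + 4C = 0`. -/
theorem stmt_4 {m : ℕ} (C₀ A₂ A₃ : Matrix (Fin m) (Fin m) ℝ)
    (h1 : A₂ * C₀ - C₀ * (A₂ + 4 • (1 : Matrix (Fin m) (Fin m) ℝ)) = 0)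
    (h2 : A₂ * A₃ - A₃ * (A₂ + 2 • (1 : Matrix (Fin m) (Fin m) ℝ)) = 0)
    (C : ℝ → Matrix (Fin m) (Fin m) ℝ)
    (hC : ∀ x : ℝ, C x = NormedSpace.exp (x • A₃) * C₀ * NormedSpace.exp (-(x • A₃))) :
    ∀ x : ℝ, (-2 * x) • (C x * A₃ - A₃ * C x) + C x * A₂ - A₂ * C x + 4 • C x = 0 := by
  have hA₂A₃ : A₂ * A₃ - A₃ * A₂ = (2 : ℝ) • A₃ := by
    rw [mul_add, mul_smul_comm, mul_one] at h2
    rw [← sub_eq_zero, ← h2]; module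
  have hC₀A₂ : C₀ * A₂ - A₂ * C₀ + 4 • C₀ = 0 := by
    rw [mul_add, mul_smul_comm, mul_one] at h1
    rw [← neg_eq_zero, ← h1]; module
  intro x
  set φ := conjExp (x • A₃)
  have hA₃ : φ A₃ = A₃ := by
    simpa using conjExp_smul_apply_of_mul_sub_mul_eq_smul (a := A₃) (c := 0)
      (by rw [sub_self, zero_smul]) x
  have hA₂ : φ (A₂ + (2 * x) • A₃) = A₂ := by
    rw [map_add, map_smul, hA₃, conjExp_smul_apply_of_mul_sub_mul_eq_smul hA₂A₃,
      sub_add_cancel]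
  have hP : (-2 * x) • (C₀ * A₃ - A₃ * C₀) + C₀ * (A₂ + (2 * x) • A₃)
      - (A₂ + (2 * x) • A₃) * C₀ + 4 • C₀ = 0 := by
    rw [← hC₀A₂]
    simp only [mul_add, add_mul, mul_smul_comm, smul_mul_assoc]
    module
  have hφP := congrArg φ hP
  simp only [map_add, map_sub, map_smul, map_mul, map_nsmul, map_zero, hA₂, hA₃] at hφP
  rw [hC]
  exact hφP
end

section
/- Let C₀, A₁, A₂, A₃ be m×m real matrices with A₁A₃ - A₃A₁ = A₂, A₂C₀ - C₀(A₂+4E) = 0, C₀A₁ - A₁C₀ = 0, and A₂A₃ - A₃A₂ = 2A₃. Define C(x) = e^{xA₃} C₀ e^{-xA₃} and S₁(x) = 4x C₀ - x²(C₀A₃ - A₃C₀) + C₀ e^{-xA₃} A₁ e^{xA₃} - e^{-xA₃} A₁ e^{xA₃} C₀. Then S₁(x) = 0 for all real x. -/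
open Matrix NormedSpace

/-!
Write `Ad_x M = e^{-x A} M e^{x A}`. Its derivative in `x` is `Ad_x [M, A]`, so a function `f` with
`f 0 = M` and `f' = Ad [M, A]` must equal `Ad M`. Since `[A₁, A₃] = A₂`, `[A₂, A₃] = 2 A₃` and
`Ad_x A₃ = A₃`, this identifies `Ad_x A₁ = A₁ + x A₂ + x² A₃`, after which
`S₁(x) = 4x C₀ + x [C₀, A₂]`, which vanishes by the relation between `A₂` and `C₀`.
-/

section ExpConj

variable {𝔸 : Type*} [NormedRing 𝔸] [NormedAlgebra ℝ 𝔸] [CompleteSpace 𝔸]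

theorem hasDerivAt_exp_neg_smul_mul_mul_exp_smul (A M : 𝔸) (x : ℝ) :
    HasDerivAt (fun t : ℝ => exp (-(t • A)) * M * exp (t • A))
      (exp (-(x • A)) * (M * A - A * M) * exp (x • A)) x := by
  have hneg : HasDerivAt (fun t : ℝ => exp (-(t • A))) (exp (-(x • A)) * -A) x := by
    simpa only [smul_neg, neg_smul] using hasDerivAt_exp_smul_const (-A) x
  have hcomm : exp (x • A) * A = A * exp (x • A) :=
    (((Commute.refl A).smul_right x).exp_right).symm.eq
  refine ((hneg.mul_const M).mul (hasDerivAt_exp_smul_const A x)).congr_deriv ?_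
  rw [hcomm]
  noncomm_ring

theorem exp_neg_smul_mul_mul_exp_smul_eq {A M : 𝔸} {f : ℝ → 𝔸} (hf₀ : f 0 = M)
    (hf : ∀ x, HasDerivAt f (exp (-(x • A)) * (M * A - A * M) * exp (x • A)) x) (x : ℝ) :
    exp (-(x • A)) * M * exp (x • A) = f x := by
  have hderiv : ∀ y, HasDerivAt (fun t : ℝ => exp (-(t • A)) * M * exp (t • A) - f t) 0 y :=
    fun y => ((hasDerivAt_exp_neg_smul_mul_mul_exp_smul A M y).sub (hf y)).congr_deriv (sub_self _)
  have hconst := is_const_of_deriv_eq_zero (fun y => (hderiv y).differentiableAt)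
    (fun y => (hderiv y).deriv) x 0
  simpa [hf₀, sub_eq_zero] using hconst

theorem exp_neg_smul_mul_self_mul_exp_smul (A : 𝔸) (x : ℝ) :
    exp (-(x • A)) * A * exp (x • A) = A :=
  exp_neg_smul_mul_mul_exp_smul_eq (f := fun _ => A) rfl
    (fun y => by simpa using hasDerivAt_const y A) x

theorem exp_neg_smul_mul_mul_exp_smul_of_commutator_eq_smul {A B : 𝔸} {c : ℝ}
    (hB : B * A - A * B = c • A) (x : ℝ) :
    exp (-(x • A)) * B * exp (x • A) = B + (c * x) • A := by
  refine exp_neg_smul_mul_mul_exp_smul_eq (f := fun t => B + (c * t) • A)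
    (by simp) (fun y => ?_) x
  rw [hB, mul_smul_comm, smul_mul_assoc, exp_neg_smul_mul_self_mul_exp_smul]
  exact ((((hasDerivAt_id y).const_mul c).smul_const A).const_add B).congr_deriv (by simp)

theorem exp_neg_smul_mul_mul_exp_smul_of_commutator_eq {A B M : 𝔸} {c : ℝ}
    (hM : M * A - A * M = B) (hB : B * A - A * B = c • A) (x : ℝ) :
    exp (-(x • A)) * M * exp (x • A) = M + x • B + (c / 2 * x ^ 2) • A := by
  refine exp_neg_smul_mul_mul_exp_smul_eq (f := fun t => M + t • B + (c / 2 * t ^ 2) • A)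
    (by simp) (fun y => ?_) x
  rw [hM, exp_neg_smul_mul_mul_exp_smul_of_commutator_eq_smul hB]
  have hsq : HasDerivAt (fun t : ℝ => c / 2 * t ^ 2) (c * y) y :=
    ((hasDerivAt_pow 2 y).const_mul (c / 2)).congr_deriv (by push_cast; ring)
  exact ((((hasDerivAt_id y).smul_const B).const_add M).add (hsq.smul_const A)).congr_deriv
    (by simp)

end ExpConj

attribute [local instance] Matrix.linftyOpNormedRing Matrix.linftyOpNormedAlgebra

/-- Under the stated commutator relations, the function
`S₁(x) = 4x C₀ - x²(C₀A₃ - A₃C₀) + C₀ e^{-xA₃} A₁ e^{xA₃} - e^{-xA₃} A₁ e^{xA₃} C₀`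
vanishes identically. -/
theorem stmt_16 {m : ℕ} (C₀ A₁ A₂ A₃ : Matrix (Fin m) (Fin m) ℝ)
    (h1 : A₁ * A₃ - A₃ * A₁ = A₂)
    (h2 : A₂ * C₀ - C₀ * (A₂ + 4 • (1 : Matrix (Fin m) (Fin m) ℝ)) = 0)
    (h3 : C₀ * A₁ - A₁ * C₀ = 0)
    (h4 : A₂ * A₃ - A₃ * A₂ = 2 • A₃)
    (S₁ : ℝ → Matrix (Fin m) (Fin m) ℝ)
    (hS₁ : ∀ x : ℝ, S₁ x =
      (4 * x) • C₀ - (x ^ 2) • (C₀ * A₃ - A₃ * C₀)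
        + C₀ * (exp (-(x • A₃)) * A₁ * exp (x • A₃))
        - exp (-(x • A₃)) * A₁ * exp (x • A₃) * C₀) :
    ∀ x : ℝ, S₁ x = 0 := by
  have h4' : A₂ * A₃ - A₃ * A₂ = (2 : ℝ) • A₃ := by
    rw [h4, ← Nat.cast_smul_eq_nsmul ℝ]; norm_num
  have hC₀A₁ : C₀ * A₁ = A₁ * C₀ := sub_eq_zero.mp h3
  have hA₂C₀ : A₂ * C₀ = C₀ * A₂ + (4 : ℝ) • C₀ := by
    rw [sub_eq_zero.mp h2, mul_add, mul_smul_comm, mul_one, ← Nat.cast_smul_eq_nsmul ℝ]; norm_num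
  intro x
  have hconj : exp (-(x • A₃)) * A₁ * exp (x • A₃) = A₁ + x • A₂ + (2 / 2 * x ^ 2) • A₃ :=
    exp_neg_smul_mul_mul_exp_smul_of_commutator_eq h1 h4' x
  rw [hS₁, hconj, div_self two_ne_zero, one_mul]
  simp only [mul_add, add_mul, hC₀A₁, mul_smul_comm, smul_mul_assoc, hA₂C₀, smul_add]
  module
end
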